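/- arXiv:2208.05714 — 2 statements merged into one kernel-verified Lean document; each statement's English description precedes it below -/
import Mathlib

section
/- The integral over p = {w ∈ ℝ⁴ : 0 ≤ w₄ ≤ w₁, 0 ≤ w₃ ≤ w₂, 0 ≤ w₂ ≤ w₁, 0 ≤ w₁ ≤ 1} of the function f(w) = 1/(w₁²+w₂²+w₃²+w₄²) equals (1/2)·∫₀¹∫₀¹∫₀¹ η₁/(1+η₁²+(η₁η₂)²+η₃²) dη₃ dη₂ dη₁; in particular the singular integral over p of f is finite. -/
open MeasureTheory

/-- The region `p = {w ∈ ℝ⁴ : 0 ≤ w₄ ≤ w₁, 0 ≤ w₃ ≤ w₂, 0 ≤ w₂ ≤ w₁, 0 ≤ w₁ ≤ 1}`. -/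
def duffyRegionP : Set (Fin 4 → ℝ) :=
  {w | (0 ≤ w 3 ∧ w 3 ≤ w 0) ∧ (0 ≤ w 2 ∧ w 2 ≤ w 1) ∧
    (0 ≤ w 1 ∧ w 1 ≤ w 0) ∧ (0 ≤ w 0 ∧ w 0 ≤ 1)}

/-!
The Duffy substitution `w = (ξ, ξη₁, ξη₁η₂, ξη₃)` maps the cube `(0,1]⁴` bijectively onto the
part of `p` with all coordinates positive, which has full measure in `p`. Since
`|w|² = ξ²(1 + η₁² + (η₁η₂)² + η₃²)`, the Jacobian `ξ³η₁` absorbs the singularity: the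
pulled-back integrand `ξη₁/(1 + η₁² + (η₁η₂)² + η₃²)` is continuous on the closed cube, hence
integrable, and Fubini with `∫₀¹ ξ dξ = 1/2` gives the value.
-/

open Set

theorem Continuous.integrableOn_univ_pi_Ioc {ι E : Type*} [Fintype ι] [NormedAddCommGroup E]
    {F : (ι → ℝ) → E} (hF : Continuous F) (a b : ι → ℝ) :
    IntegrableOn F (univ.pi fun i => Ioc (a i) (b i)) :=
  (hF.continuousOn.integrableOn_compact (isCompact_univ_pi fun _ => isCompact_Icc)).mono_set
    (pi_mono fun _ _ => Ioc_subset_Icc_self)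

theorem setIntegral_univ_pi_Ioc_fin_succ {n : ℕ} {E : Type*} [NormedAddCommGroup E]
    [NormedSpace ℝ E] {F : (Fin (n + 1) → ℝ) → E} (hF : Continuous F) {a b : ℝ} (hab : a ≤ b) :
    ∫ w in univ.pi fun _ => Ioc a b, F w =
      ∫ x in a..b, ∫ y in univ.pi fun _ => Ioc a b, F (Matrix.vecCons x y) := by
  let e := MeasurableEquiv.piFinSuccAbove (fun _ : Fin (n + 1) => ℝ) 0
  have he_symm (p : ℝ × (Fin n → ℝ)) : e.symm p = Matrix.vecCons p.1 p.2 := by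
    simp [e, MeasurableEquiv.piFinSuccAbove_symm_apply, Fin.consEquiv, Matrix.vecCons]
  have hpre : (univ.pi fun _ => Ioc a b) = e ⁻¹' (Ioc a b ×ˢ univ.pi fun _ => Ioc a b) := by
    ext w
    simp [e, Fin.forall_fin_succ, MeasurableEquiv.piFinSuccAbove_apply, Fin.tail]
  have hFe : Continuous fun p : ℝ × (Fin n → ℝ) => F (Matrix.vecCons p.1 p.2) :=
    hF.comp (continuous_fst.finCons (A := fun _ => ℝ) continuous_snd)
  calc ∫ w in univ.pi fun _ => Ioc a b, F w
      = ∫ w in e ⁻¹' (Ioc a b ×ˢ univ.pi fun _ => Ioc a b), F (e.symm (e w)) := by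
        simp only [hpre, MeasurableEquiv.symm_apply_apply]
    _ = ∫ p in Ioc a b ×ˢ univ.pi fun _ => Ioc a b, F (Matrix.vecCons p.1 p.2) := by
        simp only [← he_symm]
        exact (volume_preserving_piFinSuccAbove _ 0).setIntegral_preimage_emb
          e.measurableEmbedding (fun p => F (e.symm p)) _
    _ = ∫ x in a..b, ∫ y in univ.pi fun _ => Ioc a b, F (Matrix.vecCons x y) := by
        rw [Measure.volume_eq_prod, setIntegral_prod, intervalIntegral.integral_of_le hab]
        exact (hFe.continuousOn.integrableOn_compact
          (isCompact_Icc.prod (isCompact_univ_pi fun _ => isCompact_Icc))).mono_set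
          (prod_mono Ioc_subset_Icc_self (pi_mono fun _ _ => Ioc_subset_Icc_self))

theorem inter_univ_pi_Ioi_ae_eq_of_subset_Ici {ι : Type*} [Fintype ι] {s : Set (ι → ℝ)}
    (hs : s ⊆ Ici 0) : (s ∩ univ.pi (fun _ => Ioi 0) : Set (ι → ℝ)) =ᵐ[volume] s := by
  have h := ae_eq_set_inter (ae_eq_refl s)
    (Measure.univ_pi_Ioi_ae_eq_Ici (μ := fun _ : ι => (volume : Measure ℝ)) (f := 0))
  rwa [inter_eq_left.2 hs] at h

def duffyMap (v : Fin 4 → ℝ) : Fin 4 → ℝ :=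
  ![v 0, v 0 * v 1, v 0 * v 1 * v 2, v 0 * v 3]

def duffyJacobian (v : Fin 4 → ℝ) : Matrix (Fin 4) (Fin 4) ℝ :=
  !![1, 0, 0, 0;
     v 1, v 0, 0, 0;
     v 1 * v 2, v 0 * v 2, v 0 * v 1, 0;
     v 3, 0, 0, v 0]

noncomputable def duffyFDeriv (v : Fin 4 → ℝ) : (Fin 4 → ℝ) →L[ℝ] Fin 4 → ℝ :=
  (Matrix.toLin' (duffyJacobian v)).toContinuousLinearMap

theorem hasFDerivAt_duffyMap (v : Fin 4 → ℝ) : HasFDerivAt duffyMap (duffyFDeriv v) v := by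
  rw [hasFDerivAt_pi']
  have hc (j : Fin 4) := hasFDerivAt_apply (𝕜 := ℝ) j v
  intro i
  fin_cases i <;>
    [refine (hc 0).congr_fderiv ?_; refine ((hc 0).mul (hc 1)).congr_fderiv ?_;
      refine (((hc 0).mul (hc 1)).mul (hc 2)).congr_fderiv ?_;
      refine ((hc 0).mul (hc 3)).congr_fderiv ?_] <;>
    (ext x; simp [duffyFDeriv, duffyJacobian, dotProduct, Fin.sum_univ_four] <;> ring)

theorem det_duffyJacobian (v : Fin 4 → ℝ) : (duffyJacobian v).det = v 0 ^ 3 * v 1 := by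
  rw [Matrix.det_of_isLowerTriangular]
  · simp [duffyJacobian, Fin.prod_univ_four]
    ring
  · intro i j (hij : i < j)
    fin_cases i <;> fin_cases j <;> simp_all [duffyJacobian]

theorem duffyRegionP_subset_Ici : duffyRegionP ⊆ Ici 0 := by
  rintro w ⟨⟨h3, -⟩, ⟨h2, -⟩, ⟨h1, -⟩, h0, -⟩ i
  fin_cases i <;> assumption

theorem injOn_duffyMap : InjOn duffyMap {v | v 0 ≠ 0 ∧ v 1 ≠ 0} := by
  rintro v ⟨hv0, hv1⟩ u - h
  have h0 : v 0 = u 0 := by simpa [duffyMap] using congrFun h 0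
  have h1 : v 1 = u 1 := by
    simpa [duffyMap, ← h0, hv0] using congrFun h 1
  have h2 : v 2 = u 2 := by
    simpa [duffyMap, ← h0, ← h1, hv0, hv1] using congrFun h 2
  have h3 : v 3 = u 3 := by
    simpa [duffyMap, ← h0, hv0] using congrFun h 3
  ext i
  fin_cases i <;> assumption

theorem duffyMap_image_cube :
    duffyMap '' univ.pi (fun _ => Ioc 0 1) = duffyRegionP ∩ univ.pi (fun _ => Ioi 0) := by
  ext w
  constructor
  · rintro ⟨v, hv, rfl⟩
    simp only [mem_univ_pi, mem_Ioc] at hv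
    obtain ⟨⟨h0, h0'⟩, ⟨h1, h1'⟩, ⟨h2, h2'⟩, ⟨h3, h3'⟩⟩ :=
      (⟨hv 0, hv 1, hv 2, hv 3⟩ : _ ∧ _ ∧ _ ∧ _)
    refine ⟨⟨⟨?_, ?_⟩, ⟨?_, ?_⟩, ⟨?_, ?_⟩, ?_, ?_⟩, fun i _ => ?_⟩
    any_goals fin_cases i
    all_goals simp only [duffyMap]; simp
    all_goals first
      | positivity
      | assumption
      | exact mul_le_of_le_one_right (by positivity) ‹_›
  · rintro ⟨⟨⟨-, h30⟩, ⟨-, h21⟩, ⟨-, h10⟩, -, h0⟩, hpos⟩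
    simp only [mem_univ_pi, mem_Ioi] at hpos
    have := hpos 0; have := hpos 1; have := hpos 2; have := hpos 3
    refine ⟨![w 0, w 1 / w 0, w 2 / w 1, w 3 / w 0], fun i _ => ?_, ?_⟩
    · fin_cases i <;> simp only [Fin.isValue, mem_Ioc] <;> simp <;>
        exact ⟨by positivity, by first | exact h0 | exact (div_le_one (hpos _)).2 ‹_›⟩
    · ext i
      fin_cases i <;> simp [duffyMap] <;> field_simp

theorem duffyRegionP_ae_eq_image_cube :
    duffyRegionP =ᵐ[volume] duffyMap '' univ.pi (fun _ => Ioc 0 1) := by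
  rw [duffyMap_image_cube]
  exact (inter_univ_pi_Ioi_ae_eq_of_subset_Ici duffyRegionP_subset_Ici).symm

theorem det_duffyFDeriv (v : Fin 4 → ℝ) : (duffyFDeriv v).det = v 0 ^ 3 * v 1 := by
  rw [duffyFDeriv, ContinuousLinearMap.det, LinearMap.coe_toContinuousLinearMap,
    LinearMap.det_toLin', det_duffyJacobian]

theorem abs_det_duffyFDeriv_smul_inv_sum_sq {v : Fin 4 → ℝ} (h0 : 0 ≤ v 0) (h1 : 0 ≤ v 1) :
    |(duffyFDeriv v).det| •
        (duffyMap v 0 ^ 2 + duffyMap v 1 ^ 2 + duffyMap v 2 ^ 2 + duffyMap v 3 ^ 2)⁻¹ =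
      v 0 * (v 1 / (1 + v 1 ^ 2 + (v 1 * v 2) ^ 2 + v 3 ^ 2)) := by
  rw [det_duffyFDeriv, smul_eq_mul, abs_of_nonneg (by positivity)]
  rcases h0.eq_or_lt with h0 | h0
  · simp [← h0]
  · simp only [duffyMap]
    simp
    field_simp

theorem setIntegral_univ_pi_Ioc_duffyPullback :
    ∫ v in univ.pi (fun _ : Fin 4 => Ioc (0 : ℝ) 1),
        v 0 * (v 1 / (1 + v 1 ^ 2 + (v 1 * v 2) ^ 2 + v 3 ^ 2)) =
      (1/2) * ∫ η₁ in (0:ℝ)..1, ∫ η₂ in (0:ℝ)..1, ∫ η₃ in (0:ℝ)..1,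
        η₁ / (1 + η₁ ^ 2 + (η₁ * η₂) ^ 2 + η₃ ^ 2) := by
  -- Fubini peels off one coordinate at a time, down to an integral over the point `Fin 0 → ℝ`.
  simp (disch := fun_prop (disch := intros; positivity)) only
    [setIntegral_univ_pi_Ioc_fin_succ _ zero_le_one]
  simp [measureReal_def, Real.volume_pi_Ioc, intervalIntegral.integral_const_mul,
    intervalIntegral.integral_mul_const]

/-- The singular integral of `f(w) = 1/(w₁²+w₂²+w₃²+w₄²)` over `p` is finite and equals
`(1/2)·∫₀¹∫₀¹∫₀¹ η₁/(1+η₁²+(η₁η₂)²+η₃²) dη₃ dη₂ dη₁`. -/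
theorem integral_duffyRegionP :
    IntegrableOn (fun w : Fin 4 → ℝ => (w 0 ^ 2 + w 1 ^ 2 + w 2 ^ 2 + w 3 ^ 2)⁻¹)
      duffyRegionP volume ∧
    ∫ w in duffyRegionP, (w 0 ^ 2 + w 1 ^ 2 + w 2 ^ 2 + w 3 ^ 2)⁻¹ =
      (1/2) * ∫ η₁ in (0:ℝ)..1, ∫ η₂ in (0:ℝ)..1, ∫ η₃ in (0:ℝ)..1,
        η₁ / (1 + η₁ ^ 2 + (η₁ * η₂) ^ 2 + η₃ ^ 2) := by
  set cube : Set (Fin 4 → ℝ) := univ.pi fun _ => Ioc 0 1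
  have hcube : MeasurableSet cube := MeasurableSet.univ_pi fun _ => measurableSet_Ioc
  have hderiv (v) (_ : v ∈ cube) := (hasFDerivAt_duffyMap v).hasFDerivWithinAt (s := cube)
  have hinj : InjOn duffyMap cube :=
    injOn_duffyMap.mono fun v hv => show _ ∧ _ from ⟨(hv 0 trivial).1.ne', (hv 1 trivial).1.ne'⟩
  have hregion : volume.restrict duffyRegionP = volume.restrict (duffyMap '' cube) :=
    Measure.restrict_congr_set duffyRegionP_ae_eq_image_cube
  have hpullback : EqOn (fun v => |(duffyFDeriv v).det| •
      (duffyMap v 0 ^ 2 + duffyMap v 1 ^ 2 + duffyMap v 2 ^ 2 + duffyMap v 3 ^ 2)⁻¹)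
      (fun v => v 0 * (v 1 / (1 + v 1 ^ 2 + (v 1 * v 2) ^ 2 + v 3 ^ 2))) cube := fun v hv =>
    abs_det_duffyFDeriv_smul_inv_sum_sq (hv 0 trivial).1.le (hv 1 trivial).1.le
  constructor
  · rw [IntegrableOn, hregion, ← IntegrableOn,
      integrableOn_image_iff_integrableOn_abs_det_fderiv_smul volume hcube hderiv hinj]
    refine IntegrableOn.congr_fun ?_ hpullback.symm hcube
    exact Continuous.integrableOn_univ_pi_Ioc (by fun_prop (disch := intros; positivity)) _ _
  · rw [hregion, integral_image_eq_integral_abs_det_fderiv_smul volume hcube hderiv hinj,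
      setIntegral_congr_fun hcube hpullback]
    exact setIntegral_univ_pi_Ioc_duffyPullback
end

section
/- If f : [0,1] → ℂ extends analytically to the closed ellipse E_ρ with focal points 0 and 1 and sum of half-axes ρ > 1/2, and satisfies |f| ≤ M on E_ρ, then the error of the n-point Gauss–Legendre quadrature on [0,1] satisfies E^n[f] ≤ c·(2ρ)^{−2n}·M for a constant c independent of f and n. -/
/-!
The substitution `x = (1 + cos θ) / 2` maps the strip `|Im θ| ≤ log (2ρ)` into `E_ρ`, so
`F θ = f⋆ ((1 + cos θ) / 2)` is `2π`-periodic, holomorphic and bounded by `M` on that strip.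
Shifting the contour of the Fourier integral to `Im θ = ∓ log (2ρ)` bounds the `k`-th Fourier
coefficient by `M (2ρ)^(-|k|)`. Since `F` is even, its Fourier series is the Chebyshev series
`∑ c_k T_k (2x - 1)` of `f` on `[0, 1]`. Truncating it at `|k| < 2n` gives a polynomial of degree
at most `2n - 1`, which the Gauss rule integrates exactly and which is within
`2M (2ρ)^(-2n) / (1 - 1/(2ρ))` of `f`; as the weights are positive with sum `1`, the quadrature
error is at most twice that.
-/

open MeasureTheory

/-- A Gauss(-Legendre) quadrature rule with `n` points on `[0,1]`: nodes in `[0,1]`,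
positive weights, exact for all polynomials of degree at most `2n−1`.  These
properties characterize the Gauss–Legendre rule. -/
structure GaussRule (n : ℕ) where
  node : Fin n → ℝ
  weight : Fin n → ℝ
  node_mem : ∀ i, node i ∈ Set.Icc (0:ℝ) 1
  weight_pos : ∀ i, 0 < weight i
  exact : ∀ p : Polynomial ℝ, p.natDegree ≤ 2 * n - 1 →
    ∑ i, weight i * p.eval (node i) = ∫ x in (0:ℝ)..1, p.eval x

/-- The closed ellipse with foci `0` and `1` whose semimajor and semiminor axes sum
to `ρ` (so that the sum of the distances to the foci is at most `ρ + 1/(4ρ)`). -/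
def fociEllipse (ρ : ℝ) : Set ℂ :=
  {z | ‖z‖ + ‖z - 1‖ ≤ ρ + 1 / (4 * ρ)}

open Complex
open scoped Real

theorem hasSum_ite_lt_geometric {q : ℝ} (hq₀ : 0 ≤ q) (hq₁ : q < 1) (N : ℕ) :
    HasSum (fun n : ℕ => if n < N then 0 else q ^ n) (q ^ N / (1 - q)) := by
  rw [← hasSum_nat_add_iff' N, Finset.sum_eq_zero fun i hi => if_pos (Finset.mem_range.mp hi),
    sub_zero]
  simpa [pow_add, mul_comm, div_eq_mul_inv] using
    (hasSum_geometric_of_lt_one hq₀ hq₁).mul_left (q ^ N)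

theorem norm_sub_sum_Ioo_le_of_norm_le_geometric {E : Type*} [NormedAddCommGroup E]
    {a : ℤ → E} {S : E} (hS : HasSum a S) {A q : ℝ} (hq₀ : 0 ≤ q) (hq₁ : q < 1)
    (ha : ∀ k, ‖a k‖ ≤ A * q ^ k.natAbs) (N : ℕ) :
    ‖S - ∑ k ∈ Finset.Ioo (-(N : ℤ)) N, a k‖ ≤ 2 * A * q ^ N / (1 - q) := by
  set s := Finset.Ioo (-(N : ℤ)) N
  have hmem : ∀ k : ℤ, k ∈ s ↔ k.natAbs < N := fun k => by
    simp only [s, Finset.mem_Ioo]; omega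
  have hA : 0 ≤ A := by simpa using (norm_nonneg _).trans (ha 0)
  set w : ℤ → ℝ := fun k => if k.natAbs < N then 0 else A * q ^ k.natAbs
  have hw : HasSum w (A * (q ^ N / (1 - q)) + A * (q ^ N / (1 - q)) - w 0) :=
    .of_nat_of_neg (by simpa [w] using (hasSum_ite_lt_geometric hq₀ hq₁ N).mul_left A)
      (by simpa [w] using (hasSum_ite_lt_geometric hq₀ hq₁ N).mul_left A)
  have htail : HasSum (fun k => a k - if k ∈ s then a k else 0) (S - ∑ k ∈ s, a k) :=
    hS.sub <| by
      simpa using hasSum_sum_of_ne_finset_zero (f := fun k => if k ∈ s then a k else 0)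
        (L := SummationFilter.unconditional ℤ) fun k hk => if_neg hk
  have hw₀ : 0 ≤ w 0 := by positivity
  calc ‖S - ∑ k ∈ s, a k‖
      ≤ A * (q ^ N / (1 - q)) + A * (q ^ N / (1 - q)) - w 0 :=
        htail.norm_le_of_bounded hw fun k => by
          by_cases hk : k ∈ s
          · simp [hk, w, (hmem k).mp hk]
          · simpa [hk, w, (hmem k).not.mp hk] using ha k
    _ ≤ 2 * A * q ^ N / (1 - q) := by
      rw [show 2 * A * q ^ N / (1 - q) = A * (q ^ N / (1 - q)) + A * (q ^ N / (1 - q)) by ring]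
      linarith

theorem summable_pow_natAbs {q : ℝ} (hq₀ : 0 ≤ q) (hq₁ : q < 1) :
    Summable fun k : ℤ => q ^ k.natAbs :=
  .of_nat_of_neg (by simpa using summable_geometric_of_lt_one hq₀ hq₁)
    (by simpa using summable_geometric_of_lt_one hq₀ hq₁)

theorem norm_cos_add_one_div_two_add_norm_sub_one (ζ : ℂ) :
    ‖(cos ζ + 1) / 2‖ + ‖(cos ζ + 1) / 2 - 1‖ = Real.cosh ζ.im := by
  set u := exp (ζ * I)
  have hu : u ≠ 0 := exp_ne_zero _
  have hnorm : ‖u‖ = Real.exp (-ζ.im) := by simp [u, norm_exp]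
  have hcos : cos ζ = (u + u⁻¹) / 2 := by
    rw [cos, ← exp_neg]; congr 3; ring
  have h₁ : (cos ζ + 1) / 2 = (u + 1) ^ 2 / (4 * u) := by rw [hcos]; field_simp; ring
  have h₂ : (cos ζ + 1) / 2 - 1 = (u - 1) ^ 2 / (4 * u) := by rw [hcos]; field_simp; ring
  have hpar := parallelogram_law_with_norm ℝ u 1
  have hu₀ : 0 < ‖u‖ := norm_pos_iff.mpr hu
  rw [h₂, h₁, norm_div, norm_div, norm_pow, norm_pow, norm_mul, Real.cosh_eq]
  rw [show Real.exp ζ.im = ‖u‖⁻¹ by rw [hnorm, Real.exp_neg, inv_inv], ← hnorm]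
  simp only [norm_one, one_pow, RCLike.norm_ofNat] at hpar ⊢
  field_simp
  linear_combination 2 * hpar

theorem cos_add_one_div_two_mem_fociEllipse {ρ : ℝ} (hρ : 1 / 2 < ρ) {ζ : ℂ}
    (hζ : |ζ.im| ≤ Real.log (2 * ρ)) : (cos ζ + 1) / 2 ∈ fociEllipse ρ := by
  have h2ρ : 0 < 2 * ρ := by linarith
  have hL : 0 ≤ Real.log (2 * ρ) := Real.log_nonneg (by linarith)
  change _ ≤ ρ + 1 / (4 * ρ)
  rw [norm_cos_add_one_div_two_add_norm_sub_one]
  calc Real.cosh ζ.im ≤ Real.cosh (Real.log (2 * ρ)) :=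
        Real.cosh_le_cosh.mpr (hζ.trans (le_abs_self _))
    _ = ρ + 1 / (4 * ρ) := by rw [Real.cosh_log h2ρ]; field_simp; ring

theorem cos_arccos_add_one_div_two {x : ℝ} (hx : x ∈ Set.Icc (0 : ℝ) 1) :
    (cos (Real.arccos (2 * x - 1)) + 1) / 2 = x := by
  rw [← ofReal_cos, Real.cos_arccos (by linarith [hx.1]) (by linarith [hx.2])]
  push_cast; ring

theorem ofReal_mem_fociEllipse {ρ : ℝ} (hρ : 1 / 2 < ρ) {x : ℝ}
    (hx : x ∈ Set.Icc (0 : ℝ) 1) :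
    (x : ℂ) ∈ fociEllipse ρ := by
  rw [← cos_arccos_add_one_div_two hx]
  exact cos_add_one_div_two_mem_fociEllipse hρ (by simpa using Real.log_nonneg (by linarith))

theorem integral_add_mul_I_eq_of_periodic {H : ℂ → ℂ} {T t : ℝ}
    (hH : DifferentiableOn ℂ H (Set.uIcc 0 T ×ℂ Set.uIcc 0 t)) (hper : Function.Periodic H T) :
    ∫ x in (0 : ℝ)..T, H (x + t * I) = ∫ x in (0 : ℝ)..T, H x := by
  have h := integral_boundary_rect_eq_zero_of_differentiableOn H 0 (T + t * I) (by simpa using hH)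
  have hside : ∀ y : ℝ, H (T + y * I) = H (0 + y * I) := fun y => by
    rw [zero_add, add_comm]; exact hper _
  simp only [zero_re, zero_im, add_re, add_im, ofReal_re, ofReal_im, mul_re, mul_im, I_re, I_im,
    mul_zero, mul_one, sub_zero, zero_add, add_zero, ofReal_zero, zero_mul, hside] at h
  linear_combination -h

section Strip

variable {F : ℂ → ℂ} {L M : ℝ}

theorem norm_integral_exp_mul_le_of_strip (hL : 0 ≤ L)
    (hF : DifferentiableOn ℂ F {ζ | |ζ.im| ≤ L}) (hper : Function.Periodic F (2 * π))
    (hM : ∀ ζ : ℂ, |ζ.im| ≤ L → ‖F ζ‖ ≤ M) (k : ℤ) :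
    ‖∫ x in (0 : ℝ)..2 * π, exp (-(k * x * I)) * F x‖ ≤
      2 * π * (M * Real.exp (-L) ^ k.natAbs) := by
  -- move the contour to the side of the real axis where `exp (-(k * ζ * I))` decays
  set t : ℝ := if 0 ≤ k then -L else L
  have ht : t ∈ Set.Icc (-L) L := by unfold t; split_ifs <;> simp [hL]
  have hkt : (k : ℝ) * t = k.natAbs * (-L) := by
    rw [Nat.cast_natAbs, Int.cast_abs]
    unfold t; split_ifs with hk
    · rw [abs_of_nonneg (by exact_mod_cast hk)]
    · rw [abs_of_neg (by exact_mod_cast not_le.mp hk)]; ring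
  set H : ℂ → ℂ := fun ζ => exp (-(k * ζ * I)) * F ζ
  have hHper : Function.Periodic H (2 * π) := fun ζ => by
    simp only [H, hper ζ]
    rw [show -(k * (ζ + 2 * π) * I) = -(k * ζ * I) + (-k : ℤ) * (2 * π * I) by
        push_cast; ring,
      exp_add, exp_int_mul_two_pi_mul_I, mul_one]
  have hHdiff : DifferentiableOn ℂ H (Set.uIcc 0 (2 * π) ×ℂ Set.uIcc 0 t) := by
    refine (Differentiable.differentiableOn (by fun_prop)).mul (hF.mono fun ζ hζ => ?_)
    have him := Set.uIcc_subset_Icc (by simp [hL]) ht (mem_reProdIm.mp hζ).2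
    exact abs_le.mpr him
  have hbound :
      ∀ x ∈ Set.uIoc 0 (2 * π), ‖H (x + t * I)‖ ≤ M * Real.exp (-L) ^ k.natAbs := by
    intro x _
    have hre : (-(k * ((x : ℂ) + t * I) * I)).re = k.natAbs * (-L) := by
      rw [← hkt]; simp
    rw [norm_mul, norm_exp, hre, Real.exp_nat_mul, mul_comm]
    exact mul_le_mul_of_nonneg_right (hM _ (by simpa using abs_le.mpr ht)) (by positivity)
  calc ‖∫ x in (0 : ℝ)..2 * π, H x‖ = ‖∫ x in (0 : ℝ)..2 * π, H (x + t * I)‖ := by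
        rw [integral_add_mul_I_eq_of_periodic hHdiff (by push_cast; exact hHper)]
    _ ≤ (M * Real.exp (-L) ^ k.natAbs) * |2 * π - 0| :=
        intervalIntegral.norm_integral_le_of_norm_le_const hbound
    _ = _ := by rw [sub_zero, abs_of_pos Real.two_pi_pos, mul_comm]

theorem exists_hasSum_fourier_of_strip (hL : 0 < L)
    (hF : DifferentiableOn ℂ F {ζ | |ζ.im| ≤ L}) (hper : Function.Periodic F (2 * π))
    (hM : ∀ ζ : ℂ, |ζ.im| ≤ L → ‖F ζ‖ ≤ M) :
    ∃ c : ℤ → ℂ, (∀ k, ‖c k‖ ≤ M * Real.exp (-L) ^ k.natAbs) ∧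
      ∀ x : ℝ, HasSum (fun k : ℤ => c k * exp (k * x * I)) (F x) := by
  have : Fact (0 < 2 * π) := ⟨Real.two_pi_pos⟩
  have hcont : Continuous fun x : ℝ => F x :=
    hF.continuousOn.comp_continuous continuous_ofReal fun x => by simp [hL.le]
  have hperR : Function.Periodic (fun x : ℝ => F x) (2 * π) := fun x => by
    simpa using hper x
  let G : C(AddCircle (2 * π), ℂ) := ⟨hperR.lift, continuous_coinduced_dom.mpr hcont⟩
  have hG : ∀ x : ℝ, G x = F x := fun x => hperR.lift_coe x
  have hfourier (k : ℤ) (x : ℝ) : fourier k (x : AddCircle (2 * π)) = exp (k * x * I) := by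
    rw [fourier_coe_apply]
    congr 1
    field_simp [Real.pi_ne_zero]
    push_cast
    ring
  have hcoeff : ∀ k : ℤ, fourierCoeff G k =
      (1 / (2 * π) : ℝ) • ∫ x in (0 : ℝ)..2 * π, exp (-(k * x * I)) * F x := by
    intro k
    rw [fourierCoeff_eq_intervalIntegral G k 0, zero_add]
    congr 1
    refine intervalIntegral.integral_congr fun x _ => ?_
    simp [hG, hfourier]
  have hbound : ∀ k, ‖fourierCoeff G k‖ ≤ M * Real.exp (-L) ^ k.natAbs := by
    intro k
    rw [hcoeff, norm_smul, Real.norm_of_nonneg (by positivity)]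
    calc _ ≤ 1 / (2 * π) * (2 * π * (M * Real.exp (-L) ^ k.natAbs)) :=
          mul_le_mul_of_nonneg_left (norm_integral_exp_mul_le_of_strip hL.le hF hper hM k)
            (by positivity)
      _ = _ := by field_simp
  refine ⟨fourierCoeff G, hbound, fun x => ?_⟩
  have hsum : Summable (fourierCoeff G) :=
    .of_norm_bounded ((summable_pow_natAbs (Real.exp_nonneg _)
      (Real.exp_lt_one_iff.mpr (neg_neg_of_pos hL))).mul_left M) hbound
  simpa [hG, hfourier] using has_pointwise_sum_fourier_series_of_summable hsum x

end Strip

open Polynomial Polynomial.Chebyshev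

theorem hasSum_mul_cos_of_hasSum_mul_exp {c : ℤ → ℂ} {g θ : ℂ}
    (hpos : HasSum (fun k : ℤ => c k * exp (k * θ * I)) g)
    (hneg : HasSum (fun k : ℤ => c k * exp (k * -θ * I)) g) :
    HasSum (fun k : ℤ => c k * cos (k * θ)) g := by
  have hk (k : ℤ) :
      c k * cos (k * θ) = (c k * exp (k * θ * I) + c k * exp (k * -θ * I)) / 2 := by
    rw [show (k : ℂ) * -θ * I = -(k * θ) * I by ring]
    linear_combination (c k / 2) * two_cos (k * θ)
  simpa only [← hk, add_self_div_two] using (hpos.add hneg).div_const 2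

theorem hasSum_mul_eval_T_of_hasSum_fourier {g : ℂ → ℂ} {c : ℤ → ℂ}
    (h : ∀ θ : ℝ, HasSum (fun k : ℤ => c k * exp (k * θ * I)) (g (cos θ)))
    {y : ℝ} (hy : y ∈ Set.Icc (-1 : ℝ) 1) :
    HasSum (fun k : ℤ => c k * (T ℂ k).eval (y : ℂ)) (g y) := by
  have hcos : cos (Real.arccos y : ℂ) = y := by rw [← ofReal_cos, Real.cos_arccos hy.1 hy.2]
  have hneg := h (-Real.arccos y)
  rw [ofReal_neg, cos_neg] at hneg
  simpa [← hcos, T_complex_cos] using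
    hasSum_mul_cos_of_hasSum_mul_exp (h (Real.arccos y)) hneg

theorem exists_polynomial_approx_of_hasSum_chebyshev {f : ℝ → ℂ} {c : ℤ → ℂ} {A q : ℝ}
    (hq₀ : 0 ≤ q) (hq₁ : q < 1) (hc : ∀ k, ‖c k‖ ≤ A * q ^ k.natAbs)
    (hf : ∀ x ∈ Set.Icc (0 : ℝ) 1,
      HasSum (fun k : ℤ => c k * (T ℂ k).eval ((2 * x - 1 : ℝ) : ℂ)) (f x))
    (N : ℕ) :
    ∃ p : ℂ[X], p.natDegree ≤ N - 1 ∧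
      ∀ x ∈ Set.Icc (0 : ℝ) 1, ‖f x - p.eval (x : ℂ)‖ ≤ 2 * A * q ^ N / (1 - q) := by
  set s := Finset.Ioo (-(N : ℤ)) N
  refine ⟨∑ k ∈ s, C (c k) * (T ℂ k).comp (C 2 * X - C 1), ?_, fun x hx => ?_⟩
  · refine natDegree_sum_le_of_forall_le _ _ fun k hk => ?_
    refine (natDegree_C_mul_le _ _).trans ?_
    rw [natDegree_comp, natDegree_T, natDegree_sub_C, natDegree_C_mul_X _ two_ne_zero, mul_one]
    simp only [s, Finset.mem_Ioo] at hk
    omega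
  · have heval : (∑ k ∈ s, C (c k) * (T ℂ k).comp (C 2 * X - C 1)).eval (x : ℂ) =
        ∑ k ∈ s, c k * (T ℂ k).eval ((2 * x - 1 : ℝ) : ℂ) := by
      simp [eval_finsetSum]
    have hT : ∀ k : ℤ, ‖(T ℂ k).eval ((2 * x - 1 : ℝ) : ℂ)‖ ≤ 1 := fun k => by
      rw [← complex_ofReal_eval_T, norm_real, Real.norm_eq_abs]
      exact abs_eval_T_real_le_one k (abs_le.mpr ⟨by linarith [hx.1], by linarith [hx.2]⟩)
    rw [heval]
    refine norm_sub_sum_Ioo_le_of_norm_le_geometric (hf x hx) hq₀ hq₁ (fun k => ?_) N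
    rw [norm_mul]
    exact (mul_le_of_le_one_right (norm_nonneg _) (hT k)).trans (hc k)

namespace GaussRule

variable {n : ℕ} (Q : GaussRule n)

theorem sum_weight : ∑ i, Q.weight i = 1 := by
  simpa using Q.exact 1 (by simp)

theorem sum_weight_mul_eval_eq_integral {p : ℂ[X]} (hp : p.natDegree ≤ 2 * n - 1) :
    ∑ i, (Q.weight i : ℂ) * p.eval (Q.node i : ℂ) =
      ∫ x in (0 : ℝ)..1, p.eval (x : ℂ) := by
  have hmonomial : ∀ j ≤ 2 * n - 1,
      ∑ i, (Q.weight i : ℂ) * (Q.node i : ℂ) ^ j = ∫ x in (0 : ℝ)..1, (x : ℂ) ^ j := by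
    intro j hj
    simpa only [eval_pow, eval_X, ofReal_sum, ofReal_mul, ofReal_pow,
      ← intervalIntegral.integral_ofReal] using
      congrArg ((↑) : ℝ → ℂ) (Q.exact (X ^ j) (by simpa using hj))
  simp only [eval_eq_sum_range, Finset.mul_sum]
  rw [Finset.sum_comm, intervalIntegral.integral_finsetSum fun j _ =>
    (Continuous.intervalIntegrable (by fun_prop) _ _)]
  refine Finset.sum_congr rfl fun j hj => ?_
  rw [intervalIntegral.integral_const_mul, ← hmonomial j (by grind), Finset.mul_sum]
  exact Finset.sum_congr rfl fun i _ => by ring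

theorem norm_integral_sub_sum_le {f : ℝ → ℂ} (hf : IntervalIntegrable f volume 0 1)
    {p : ℂ[X]} (hp : p.natDegree ≤ 2 * n - 1) {ε : ℝ}
    (hε : ∀ x ∈ Set.Icc (0 : ℝ) 1, ‖f x - p.eval (x : ℂ)‖ ≤ ε) :
    ‖(∫ x in (0 : ℝ)..1, f x) - ∑ i, (Q.weight i : ℂ) * f (Q.node i)‖ ≤ 2 * ε := by
  have hsplit : (∫ x in (0 : ℝ)..1, f x) - ∑ i, (Q.weight i : ℂ) * f (Q.node i) =
      (∫ x in (0 : ℝ)..1, f x - p.eval (x : ℂ)) -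
        ∑ i, (Q.weight i : ℂ) * (f (Q.node i) - p.eval (Q.node i : ℂ)) := by
    have hp_int : IntervalIntegrable (fun x : ℝ => p.eval (x : ℂ)) volume 0 1 :=
      (p.continuous.comp continuous_ofReal).intervalIntegrable _ _
    rw [intervalIntegral.integral_sub hf hp_int, ← Q.sum_weight_mul_eval_eq_integral hp]
    simp only [mul_sub, Finset.sum_sub_distrib]
    ring
  have hintegral : ‖∫ x in (0 : ℝ)..1, f x - p.eval (x : ℂ)‖ ≤ ε := by
    refine (intervalIntegral.norm_integral_le_of_norm_le_const fun x hx =>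
      hε x (Set.Ioc_subset_Icc_self (by rwa [Set.uIoc_of_le zero_le_one] at hx))).trans_eq ?_
    norm_num
  have hsum : ‖∑ i, (Q.weight i : ℂ) * (f (Q.node i) - p.eval (Q.node i : ℂ))‖ ≤ ε :=
    calc _ ≤ ∑ i, Q.weight i * ε := by
          refine (norm_sum_le _ _).trans (Finset.sum_le_sum fun i _ => ?_)
          rw [norm_mul, norm_real, Real.norm_of_nonneg (Q.weight_pos i).le]
          exact mul_le_mul_of_nonneg_left (hε _ (Q.node_mem i)) (Q.weight_pos i).le
      _ = ε := by rw [← Finset.sum_mul, Q.sum_weight, one_mul]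
  rw [hsplit, two_mul]
  exact (norm_sub_le _ _).trans (add_le_add hintegral hsum)

end GaussRule

/-- Derivative-free Gauss quadrature error estimate (Davis): if `f : [0,1] → ℂ` has an
analytic extension `f⋆` to the ellipse `E_ρ`, `ρ > 1/2`, bounded by `M` there, then the
`n`-point Gauss rule satisfies `E^n[f] ≤ c (2ρ)^(−2n) M` with `c` independent of `f`,
`M` and `n`. -/
theorem gauss_error_one_dim (ρ : ℝ) (hρ : 1/2 < ρ) :
    ∃ c > 0, ∀ (n : ℕ) (Q : GaussRule n) (f : ℝ → ℂ) (fstar : ℂ → ℂ) (M : ℝ),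
      DifferentiableOn ℂ fstar (fociEllipse ρ) →
      (∀ x ∈ Set.Icc (0:ℝ) 1, fstar x = f x) →
      (∀ z ∈ fociEllipse ρ, ‖fstar z‖ ≤ M) →
      ‖(∫ x in (0:ℝ)..1, f x) - ∑ i, (Q.weight i : ℂ) * f (Q.node i)‖ ≤
        c * (2 * ρ) ^ (-(2 * n : ℝ)) * M := by
  have h2ρ : 1 < 2 * ρ := by linarith
  set q := (2 * ρ)⁻¹
  have hq₀ : 0 ≤ q := by positivity
  have hq₁ : q < 1 := inv_lt_one_of_one_lt₀ h2ρ
  refine ⟨4 / (1 - q), by have := sub_pos.mpr hq₁; positivity,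
    fun n Q f fstar M hd hagree hM => ?_⟩
  set L := Real.log (2 * ρ)
  have hexp : Real.exp (-L) = q := by rw [Real.exp_neg, Real.exp_log (by linarith)]
  have hstrip : ∀ ζ : ℂ, |ζ.im| ≤ L → (cos ζ + 1) / 2 ∈ fociEllipse ρ :=
    fun ζ => cos_add_one_div_two_mem_fociEllipse hρ
  obtain ⟨c, hc, hfourier⟩ := exists_hasSum_fourier_of_strip
    (F := fun ζ => fstar ((cos ζ + 1) / 2)) (Real.log_pos h2ρ)
    (hd.comp (by fun_prop) fun ζ hζ => hstrip ζ hζ)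
    (fun ζ => by simp only [cos_add_two_pi]) (fun ζ hζ => hM _ (hstrip ζ hζ))
  have hcheb : ∀ x ∈ Set.Icc (0 : ℝ) 1,
      HasSum (fun k : ℤ => c k * (T ℂ k).eval ((2 * x - 1 : ℝ) : ℂ)) (f x) := fun x hx => by
    have h := hasSum_mul_eval_T_of_hasSum_fourier (g := fun z => fstar ((z + 1) / 2)) hfourier
      (y := 2 * x - 1) ⟨by linarith [hx.1], by linarith [hx.2]⟩
    rwa [show (((2 * x - 1 : ℝ) : ℂ) + 1) / 2 = x by push_cast; ring, hagree x hx] at h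
  obtain ⟨p, hp, happrox⟩ := exists_polynomial_approx_of_hasSum_chebyshev hq₀ hq₁
    (hexp ▸ hc) hcheb (2 * n)
  have hf : IntervalIntegrable f volume 0 1 := by
    refine ContinuousOn.intervalIntegrable_of_Icc zero_le_one ?_
    exact (hd.continuousOn.comp continuous_ofReal.continuousOn fun x hx =>
      ofReal_mem_fociEllipse hρ hx).congr fun x hx => (hagree x hx).symm
  calc _ ≤ 2 * (2 * M * q ^ (2 * n) / (1 - q)) := Q.norm_integral_sub_sum_le hf hp happrox
    _ = 4 / (1 - q) * (2 * ρ) ^ (-(2 * n : ℝ)) * M := by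
      rw [Real.rpow_neg (by linarith), ← Nat.cast_ofNat, ← Nat.cast_mul, Real.rpow_natCast,
        ← inv_pow]
      ring
end
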